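/- Let X be a sup-sober T₀-space satisfying the *-property. If the Irr-convergence class 𝓘 of X satisfies Kelley's (Iterated limits) axiom, then X is both Irr-continuous and SI⁻-continuous. -/
import Mathlib


universe u v w

open Set

/-- A preordered index type is a (nonempty) directed index set for nets. -/
def IsDirIdx (I : Type v) [Preorder I] : Prop :=
  Nonempty I ∧ ∀ i j : I, ∃ k, i ≤ k ∧ j ≤ k

/-- Convergence of a net with respect to a topology `t` on `X`. -/
def NetConv {X : Type u} (t : TopologicalSpace X) {I : Type v} [Preorder I]
    (net : I → X) (x : X) : Prop :=
  ∀ U : Set X, t.IsOpen U → x ∈ U → ∃ k, ∀ i, k ≤ i → net i ∈ U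

section
variable {X : Type u} [TopologicalSpace X]

/-- The specialisation order: `x ≤ y` iff `x ∈ cl {y}`. -/
def sLE (x y : X) : Prop := x ∈ closure ({y} : Set X)

/-- `b` is an upper bound of `A` in the specialisation order. -/
def IsUB (A : Set X) (b : X) : Prop := ∀ a ∈ A, sLE a b

/-- `s` is the supremum (least upper bound) of `A` in the specialisation order. -/
def IsSupSpec (A : Set X) (s : X) : Prop := IsUB A s ∧ ∀ b, IsUB A b → sLE s b

/-- The upper set `↑x` in the specialisation order. -/
def upS (x : X) : Set X := {u | sLE x u}

/-- The lower set `↓A` in the specialisation order. -/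
def downS (A : Set X) : Set X := {u | ∃ a ∈ A, sLE u a}

/-- The Irr-way-below relation: `x ≪_Irr y` iff every irreducible set `E`
whose supremum exists and dominates `y` meets `↑x`. -/
def wbIrr (x y : X) : Prop :=
  ∀ E : Set X, IsIrreducible E → ∀ s : X, IsSupSpec E s → sLE y s → (E ∩ upS x).Nonempty

/-- `↡x = {u | u ≪_Irr x}`. -/
def ddIrr (x : X) : Set X := {u | wbIrr u x}

/-- `↟x = {u | x ≪_Irr u}`. -/
def uuIrr (x : X) : Set X := {u | wbIrr x u}

/-- A directed subset (w.r.t. the specialisation order): nonempty and every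
pair of elements has an upper bound in the set. -/
def DirectedSub (D : Set X) : Prop :=
  D.Nonempty ∧ ∀ a ∈ D, ∀ b ∈ D, ∃ c ∈ D, sLE a c ∧ sLE b c

/-- `e` is an eventual lower bound of the net `net`. -/
def EvLB {I : Type v} [Preorder I] (net : I → X) (e : X) : Prop :=
  ∃ k, ∀ i, k ≤ i → sLE e (net i)

/-- Irr-convergence: the net `net` Irr-converges to `y` iff there is an
irreducible set `E` with a supremum `≥ y` consisting of eventual lower
bounds of the net. -/
def IrrConv {I : Type v} [Preorder I] (net : I → X) (y : X) : Prop :=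
  ∃ E : Set X, IsIrreducible E ∧ (∃ s, IsSupSpec E s ∧ sLE y s) ∧ ∀ e ∈ E, EvLB net e

end

/-- Sup-sobriety: every closed irreducible set having a supremum is the
closure of the singleton of its supremum. -/
def SupSober (X : Type u) [TopologicalSpace X] : Prop :=
  ∀ F : Set X, IsClosed F → IsIrreducible F → ∀ s : X, IsSupSpec F s → F = closure {s}

/-- `U` is open in the irreducibly-derived topology `τ_SI`. -/
def SIOpen {X : Type u} [TopologicalSpace X] (U : Set X) : Prop :=
  IsOpen U ∧ ∀ E : Set X, IsIrreducible E → ∀ s : X, IsSupSpec E s → s ∈ U →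
    (E ∩ U).Nonempty

/-- Interior with respect to the irreducibly-derived topology. -/
def SIint {X : Type u} [TopologicalSpace X] (A : Set X) : Set X :=
  ⋃₀ {U : Set X | SIOpen U ∧ U ⊆ A}

/-- Irr-continuity: every `↡x` is irreducible with supremum `x`. -/
def IrrCont (X : Type u) [TopologicalSpace X] : Prop :=
  ∀ x : X, IsIrreducible (ddIrr x) ∧ IsSupSpec (ddIrr x) x

/-- SI⁻-continuity: every `↡x` contains a directed subset with supremum `x`. -/
def SImCont (X : Type u) [TopologicalSpace X] : Prop :=
  ∀ x : X, ∃ D : Set X, D ⊆ ddIrr x ∧ DirectedSub D ∧ IsSupSpec D x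

/-- The `*`-property: for every irreducible `F` with a supremum there is a
directed subset of `↓F` with the same supremum. -/
def StarProp (X : Type u) [TopologicalSpace X] : Prop :=
  ∀ F : Set X, IsIrreducible F → ∀ s : X, IsSupSpec F s →
    ∃ D : Set X, D ⊆ downS F ∧ DirectedSub D ∧ IsSupSpec D s

/-- The `⊕`-property: every `↟x` is open. -/
def OplusProp (X : Type u) [TopologicalSpace X] : Prop :=
  ∀ x : X, IsOpen (uuIrr x)

/-- C-space: for every open `U` and `x ∈ U` there is `y ∈ U` with
`x ∈ int (↑y)`. -/
def CSpace (X : Type u) [TopologicalSpace X] : Prop :=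
  ∀ U : Set X, IsOpen U → ∀ x ∈ U, ∃ y ∈ U, x ∈ interior (upS y)

/-- The Irr-convergence class is topological: some topology induces it. -/
def IrrTopological (X : Type u) [TopologicalSpace X] : Prop :=
  ∃ t : TopologicalSpace X, ∀ (I : Type u) [Preorder I], IsDirIdx I →
    ∀ (net : I → X) (y : X), IrrConv net y ↔ NetConv t net y

/-- The family `τ_𝓘` of sets induced by the Irr-convergence class. -/
def tauI (X : Type u) [TopologicalSpace X] : Set (Set X) :=
  {U | ∀ (I : Type u) [Preorder I], IsDirIdx I → ∀ (net : I → X) (y : X),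
      IrrConv net y → y ∈ U → ∃ k, ∀ i, k ≤ i → net i ∈ U}

/-- Kelley's (Iterated limits) axiom for the Irr-convergence class. -/
def IterLimAxiom (X : Type u) [TopologicalSpace X] : Prop :=
  ∀ (I : Type u) [Preorder I], IsDirIdx I →
    ∀ (J : I → Type u) [∀ i, Preorder (J i)], (∀ i, IsDirIdx (J i)) →
      ∀ (xi : I → X) (xx : ∀ i, J i → X) (x : X),
        IrrConv xi x → (∀ i, IrrConv (xx i) (xi i)) →
        IrrConv (fun p : I × (∀ i, J i) => xx p.1 (p.2 p.1)) x
section AuxLemmas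
variable {X : Type u} [TopologicalSpace X]

lemma sLE_refl' (x : X) : sLE x x := subset_closure rfl

lemma sLE_trans' {x y z : X} (h1 : sLE x y) (h2 : sLE y z) : sLE x z :=
  closure_minimal (Set.singleton_subset_iff.mpr h2) isClosed_closure h1

lemma mem_open_of_sLE {U : Set X} (hU : IsOpen U) {d c : X} (hd : d ∈ U)
    (h : sLE d c) : c ∈ U := by
  by_contra hc
  have h2 : ({c} : Set X) ⊆ Uᶜ := Set.singleton_subset_iff.mpr hc
  exact closure_minimal h2 hU.isClosed_compl h hd

lemma isIrreducible_of_directedSub {D : Set X} (hD : DirectedSub D) :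
    IsIrreducible D := by
  refine ⟨hD.1, fun u v hu hv ⟨d1, hd1D, hd1u⟩ ⟨d2, hd2D, hd2v⟩ => ?_⟩
  obtain ⟨c, hcD, h1c, h2c⟩ := hD.2 d1 hd1D d2 hd2D
  exact ⟨c, hcD, mem_open_of_sLE hu hd1u h1c, mem_open_of_sLE hv hd2v h2c⟩

lemma isSupSpec_singleton (x : X) : IsSupSpec ({x} : Set X) x :=
  ⟨fun a ha => ha ▸ sLE_refl' x, fun b hb => hb x rfl⟩

lemma ddIrr_lower {x u v : X} (huv : sLE u v) (hv : v ∈ ddIrr x) : u ∈ ddIrr x := by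
  intro E hE s hs hxs
  obtain ⟨a, haE, hva⟩ := hv E hE s hs hxs
  exact ⟨a, haE, sLE_trans' huv hva⟩

lemma wbIrr_le {x u : X} (hu : wbIrr u x) : sLE u x := by
  obtain ⟨a, ha, hua⟩ := hu {x} isIrreducible_singleton x (isSupSpec_singleton x) (sLE_refl' x)
  exact ha ▸ hua

end AuxLemmas

/-- in a sup-sober space with the *-property, the (Iterated
limits) axiom implies Irr-continuity and SI⁻-continuity. -/
theorem cont_of_iterLim {X : Type u} [TopologicalSpace X] [T0Space X]
    (hs : SupSober X) (hstar : StarProp X) (hIL : IterLimAxiom X) :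
    IrrCont X ∧ SImCont X := by
  have key : ∀ x : X, IsIrreducible (ddIrr x) ∧ IsSupSpec (ddIrr x) x := by
    intro x
    -- index type of directed sets with sup above x
    let I : Type u := {D : Set X // DirectedSub D ∧ ∃ s, IsSupSpec D s ∧ sLE x s}
    letI : Preorder I :=
      { le := fun _ _ => True
        lt := fun _ _ => False
        le_refl := fun _ => trivial
        le_trans := fun _ _ _ _ _ => trivial
        lt_iff_le_not_ge := fun _ _ => by simp }
    have hxdir : DirectedSub ({x} : Set X) :=
      ⟨⟨x, rfl⟩, fun a ha b hb => ⟨x, rfl, ha ▸ sLE_refl' x, hb ▸ sLE_refl' x⟩⟩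
    let i₀ : I := ⟨{x}, hxdir, x, isSupSpec_singleton x, sLE_refl' x⟩
    have hIdx : IsDirIdx I := ⟨⟨i₀⟩, fun i j => ⟨i, trivial, trivial⟩⟩
    let J : I → Type u := fun i => {d : X // d ∈ i.1}
    letI : ∀ i, Preorder (J i) := fun i =>
      { le := fun a b => sLE a.1 b.1
        le_refl := fun a => sLE_refl' a.1
        le_trans := fun a b c => sLE_trans' }
    have hJ : ∀ i, IsDirIdx (J i) := by
      intro i
      obtain ⟨⟨d, hd⟩, hdir⟩ := i.2.1
      refine ⟨⟨⟨d, hd⟩⟩, fun a b => ?_⟩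
      obtain ⟨c, hc, h1, h2⟩ := hdir a.1 a.2 b.1 b.2
      exact ⟨⟨c, hc⟩, h1, h2⟩
    have h1 : IrrConv (fun _ : I => x) x := by
      refine ⟨{x}, isIrreducible_singleton, ⟨x, isSupSpec_singleton x, sLE_refl' x⟩,
        fun e he => ⟨i₀, fun i _ => he ▸ sLE_refl' x⟩⟩
    have h2 : ∀ i : I, IrrConv (fun j : J i => j.1) x := by
      intro i
      obtain ⟨s, hs, hxs⟩ := i.2.2
      exact ⟨i.1, isIrreducible_of_directedSub i.2.1, ⟨s, hs, hxs⟩,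
        fun e he => ⟨⟨e, he⟩, fun j hj => hj⟩⟩
    have hd := hIL I hIdx J hJ (fun _ => x) (fun i (j : J i) => j.1) x h1 h2
    obtain ⟨E, hEirr, ⟨s, hs, hxs⟩, hEv⟩ := hd
    -- every element of E is way below x
    have hsub : E ⊆ ddIrr x := by
      intro e he E' hE' s' hs' hxs'
      obtain ⟨D, hDsub, hDdir, hDsup⟩ := hstar E' hE' s' hs'
      let i₁ : I := ⟨D, hDdir, s', hDsup, hxs'⟩
      obtain ⟨⟨k, f⟩, hk⟩ := hEv e he
      have hef : sLE e (f i₁).1 := hk (i₁, f) ⟨trivial, le_refl f⟩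
      obtain ⟨a, haE', hfa⟩ := hDsub (f i₁).2
      exact ⟨a, haE', sLE_trans' hef hfa⟩
    have hsup : IsSupSpec (ddIrr x) x := by
      refine ⟨fun u hu => wbIrr_le hu, fun b hb => ?_⟩
      exact sLE_trans' hxs (hs.2 b (fun a ha => hb a (hsub ha)))
    have hcl : ddIrr x ⊆ closure E := by
      intro u hu
      obtain ⟨a, haE, hua⟩ := hu E hEirr s hs hxs
      exact closure_mono (Set.singleton_subset_iff.mpr haE) hua
    have hcleq : closure (ddIrr x) = closure E :=
      Set.Subset.antisymm (closure_minimal hcl isClosed_closure) (closure_mono hsub)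
    have hirr : IsIrreducible (ddIrr x) := by
      rw [← isIrreducible_iff_closure, hcleq, isIrreducible_iff_closure]
      exact hEirr
    exact ⟨hirr, hsup⟩
  constructor
  · exact key
  · intro x
    obtain ⟨hirr, hsup⟩ := key x
    obtain ⟨D, hDsub, hDdir, hDsup⟩ := hstar (ddIrr x) hirr x hsup
    refine ⟨D, fun u hu => ?_, hDdir, hDsup⟩
    obtain ⟨v, hv, huv⟩ := hDsub hu
    exact ddIrr_lower huv hv
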